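/- Let A ∈ sp(V, Ω) satisfy A² = +I, with V₊ = ker(A − I), V₋ = ker(A + I), projection P₊: V → V₊ along V₋ and P₋ = I − P₊. Then the rule g(z) = f(z₊) + [((Df_{z₊} ∘ P₊)†)|_{V₋}]⁻¹(z₋) (where z₊ = P₊(z), z₋ = P₋(z), and † denotes the symplectic adjoint) defines a group isomorphism from the group Diff(V₊) of all diffeomorphisms of V₊ onto Aut(V, θ^A): for each diffeomorphism f of V₊ the map g is a diffeomorphism of V satisfying Ω(g(z) − A(g(z)), Dg_z(v)) = Ω(z − Az, v) for all z, v ∈ V, every such g arises from a unique f, and composition of f's corresponds to composition of g's. -/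

import Mathlib

set_option linter.unusedSectionVars false
set_option linter.unusedVariables false
set_option maxHeartbeats 1000000



/-- A (smooth) diffeomorphism: a smooth map with a smooth two-sided inverse. -/
def IsDiffeo {E : Type*} [NormedAddCommGroup E] [NormedSpace ℝ E] (g : E → E) : Prop :=
  ContDiff ℝ (⊤ : ℕ∞) g ∧
    ∃ h : E → E, ContDiff ℝ (⊤ : ℕ∞) h ∧ Function.LeftInverse h g ∧ Function.RightInverse h g

/-- `g` preserves the Liouville form `θ^A = θ⁰ + dψ^A`. -/
def PreservesLiouville {V : Type*} [NormedAddCommGroup V] [NormedSpace ℝ V]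
    (Ω : V →ₗ[ℝ] V →ₗ[ℝ] ℝ) (A : V →ₗ[ℝ] V) (g : V → V) : Prop :=
  ∀ z v : V, Ω (g z - A (g z)) (fderiv ℝ g z v) = Ω (z - A z) v

/-- The linear map `F_z = Df_{z₊} ∘ P₊ : V → V`, where `f : V₊ → V₊`, `P₊` is the
projection of `V` onto `V₊` and `z₊ = P₊(z)`. -/
noncomputable def Fmap {V : Type*} [NormedAddCommGroup V] [NormedSpace ℝ V]
    (Vp : Submodule ℝ V) (P : V →ₗ[ℝ] V) (hPr : ∀ z : V, P z ∈ Vp)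
    (f : Vp → Vp) (z : V) : V →ₗ[ℝ] V :=
  Vp.subtype ∘ₗ (fderiv ℝ f ⟨P z, hPr z⟩).toLinearMap ∘ₗ P.codRestrict Vp hPr

/-- `g` is given from `f` by the rule `g(z) = f(z₊) + [((Df_{z₊} ∘ P₊)†)|_{V₋}]⁻¹(z₋)`:
equivalently, `g(z) − f(z₊)` lies in `V₋` and any symplectic adjoint of `F_z` carries it
to `z₋ = z − P₊(z)`. -/
def GivenByRule {V : Type*} [NormedAddCommGroup V] [NormedSpace ℝ V]
    (Ω : V →ₗ[ℝ] V →ₗ[ℝ] ℝ) (Vp Vm : Submodule ℝ V)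
    (P : V →ₗ[ℝ] V) (hPr : ∀ z : V, P z ∈ Vp)
    (f : Vp → Vp) (g : V → V) : Prop :=
  ∀ z : V,
    g z - (f ⟨P z, hPr z⟩ : V) ∈ Vm ∧
    ∀ Fdag : V →ₗ[ℝ] V,
      (∀ x y : V, Ω (Fdag x) y = Ω x (Fmap Vp P hPr f z y)) →
      Fdag (g z - (f ⟨P z, hPr z⟩ : V)) = z - P z


set_option linter.unusedSectionVars false

section Aux
variable {V : Type*} [NormedAddCommGroup V] [NormedSpace ℝ V] [FiniteDimensional ℝ V]

/-- Bundled hypotheses of the statement. -/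
structure SympSetup (Ω : V →ₗ[ℝ] V →ₗ[ℝ] ℝ) (A P : V →ₗ[ℝ] V) : Prop where
  alt : ∀ x : V, Ω x x = 0
  nd : ∀ x : V, (∀ y : V, Ω x y = 0) → x = 0
  symp : ∀ x y : V, Ω (A x) y + Ω x (A y) = 0
  sq : A ∘ₗ A = LinearMap.id
  range : ∀ z : V, P z ∈ LinearMap.ker (A - LinearMap.id)
  projp : ∀ x ∈ LinearMap.ker (A - LinearMap.id), P x = x
  projm : ∀ x ∈ LinearMap.ker (A + LinearMap.id), P x = 0

namespace SympSetup

variable {Ω : V →ₗ[ℝ] V →ₗ[ℝ] ℝ} {A P : V →ₗ[ℝ] V} (S : SympSetup Ω A P)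

include S

lemma skew (x y : V) : Ω x y = - Ω y x := by
  have h := S.alt (x + y)
  simp only [map_add, LinearMap.add_apply, S.alt] at h
  linarith

lemma memVp_iff (x : V) : x ∈ LinearMap.ker (A - LinearMap.id) ↔ A x = x := by
  simp [LinearMap.mem_ker, LinearMap.sub_apply, sub_eq_zero]

lemma memVm_iff (x : V) : x ∈ LinearMap.ker (A + LinearMap.id) ↔ A x = -x := by
  simp [LinearMap.mem_ker, LinearMap.add_apply, add_eq_zero_iff_eq_neg]

lemma A2_apply (z : V) : A (A z) = z := by
  have := LinearMap.ext_iff.mp S.sq z; simpa using this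

lemma P_def (z : V) : P z = (2:ℝ)⁻¹ • (z + A z) := by
  have h1 : (2:ℝ)⁻¹ • (z + A z) ∈ LinearMap.ker (A - LinearMap.id) := by
    rw [S.memVp_iff]
    rw [map_smul, map_add, S.A2_apply]
    rw [add_comm (A z) z]
  have h2 : (2:ℝ)⁻¹ • (z - A z) ∈ LinearMap.ker (A + LinearMap.id) := by
    rw [S.memVm_iff]
    rw [map_smul, map_sub, S.A2_apply, ← smul_neg, neg_sub]
  have hz : z = (2:ℝ)⁻¹ • (z + A z) + (2:ℝ)⁻¹ • (z - A z) := by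
    rw [← smul_add]; match_scalars <;> ring
  calc P z = P ((2:ℝ)⁻¹ • (z + A z)) + P ((2:ℝ)⁻¹ • (z - A z)) := by
        rw [← map_add, ← hz]
    _ = (2:ℝ)⁻¹ • (z + A z) := by rw [S.projp _ h1, S.projm _ h2, add_zero]

lemma AP (z : V) : A (P z) = P z := (S.memVp_iff _).mp (S.range z)

lemma AQ (z : V) : A (z - P z) = -(z - P z) := by
  have h1 : A (z - P z) = A z - P z := by rw [map_sub, S.AP]
  rw [h1, S.P_def]
  match_scalars <;> ring

lemma PP (z : V) : P (P z) = P z := S.projp _ (S.range z)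

lemma PQ (z : V) : P (z - P z) = 0 := by
  rw [map_sub, S.PP, sub_self]

lemma memQ (z : V) : z - P z ∈ LinearMap.ker (A + LinearMap.id) :=
  (S.memVm_iff _).mpr (S.AQ z)

lemma memVm_iffP (z : V) : z ∈ LinearMap.ker (A + LinearMap.id) ↔ P z = 0 := by
  constructor
  · exact S.projm z
  · intro h
    rw [S.memVm_iff]
    have := S.AQ z
    rwa [h, sub_zero] at this

lemma sub_A_eq (z : V) : z - A z = (2:ℝ) • (z - P z) := by
  rw [S.P_def]; match_scalars <;> ring

lemma plus_plus {x y : V} (hx : A x = x) (hy : A y = y) : Ω x y = 0 := by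
  have := S.symp x y; rw [hx, hy] at this; linarith

lemma minus_minus {x y : V} (hx : A x = -x) (hy : A y = -y) : Ω x y = 0 := by
  have := S.symp x y; rw [hx, hy] at this; simp at this; linarith

lemma split2 (x y : V) : Ω x y = Ω x (P y) + Ω x (y - P y) := by
  rw [map_sub]; ring

lemma split1 (x y : V) : Ω x y = Ω (P x) y + Ω (x - P x) y := by
  rw [map_sub, LinearMap.sub_apply]; ring

lemma omega_m_reduce {x : V} (hx : A x = -x) (y : V) : Ω x y = Ω x (P y) := by
  have h0 : Ω x (y - P y) = 0 := S.minus_minus hx (S.AQ y)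
  rw [S.split2 x y, h0, add_zero]

lemma omega_p_reduce {x : V} (hx : A x = x) (y : V) : Ω x y = Ω x (y - P y) := by
  have h0 : Ω x (P y) = 0 := S.plus_plus hx (S.AP y)
  rw [S.split2 x y, h0, zero_add]

lemma minus_zero {x : V} (hx : A x = -x) (h : ∀ u : V, A u = u → Ω x u = 0) : x = 0 := by
  refine S.nd x fun y => ?_
  rw [S.omega_m_reduce hx y]
  exact h _ (S.AP y)

lemma plus_zero {x : V} (hx : A x = x) (h : ∀ u : V, A u = -u → Ω x u = 0) : x = 0 := by
  refine S.nd x fun y => ?_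
  rw [S.omega_p_reduce hx y]
  exact h _ (S.AQ y)

lemma qm_identity (a b : V) : Ω (a - P a) b - Ω (b - P b) a = Ω a b := by
  have hpp : Ω (P a) (P b) = 0 := S.plus_plus (S.AP a) (S.AP b)
  have hmm : Ω (a - P a) (b - P b) = 0 := S.minus_minus (S.AQ a) (S.AQ b)
  have hmm' : Ω (b - P b) (a - P a) = 0 := S.minus_minus (S.AQ b) (S.AQ a)
  have hsk : Ω (b - P b) (P a) = - Ω (P a) (b - P b) := S.skew _ _
  have e1 : Ω a b = Ω (P a) (P b) + Ω (P a) (b - P b)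
      + (Ω (a - P a) (P b) + Ω (a - P a) (b - P b)) := by
    rw [S.split1 a b, S.split2 (P a) b, S.split2 (a - P a) b]
  have e2 : Ω (a - P a) b = Ω (a - P a) (P b) + Ω (a - P a) (b - P b) := S.split2 _ _
  have e3 : Ω (b - P b) a = Ω (b - P b) (P a) + Ω (b - P b) (a - P a) := S.split2 _ _
  rw [e2, e3, hmm, hmm', hsk]; rw [e1, hpp, hmm]; ring

end SympSetup
end Aux

section Aux2
variable {V : Type*} [NormedAddCommGroup V] [NormedSpace ℝ V] [FiniteDimensional ℝ V]

-- dagger machinery, standalone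
noncomputable def omegaEquiv (Ω : V →ₗ[ℝ] V →ₗ[ℝ] ℝ)
    (hnd : ∀ x : V, (∀ y : V, Ω x y = 0) → x = 0) : V ≃ₗ[ℝ] Module.Dual ℝ V :=
  Ω.linearEquivOfInjective
    (by
      intro x y hxy
      have : ∀ u, Ω (x - y) u = 0 := by
        intro u; rw [map_sub]; simp [LinearMap.sub_apply, hxy]
      have := hnd _ this
      exact sub_eq_zero.mp this)
    Subspace.dual_finrank_eq.symm

lemma omegaEquiv_apply (Ω : V →ₗ[ℝ] V →ₗ[ℝ] ℝ) (hnd) (x : V) :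
    omegaEquiv Ω hnd x = Ω x := by
  rfl

noncomputable def dagMap (Ω : V →ₗ[ℝ] V →ₗ[ℝ] ℝ)
    (hnd : ∀ x : V, (∀ y : V, Ω x y = 0) → x = 0) (F : V →ₗ[ℝ] V) : V →ₗ[ℝ] V :=
  (omegaEquiv Ω hnd).symm.toLinearMap ∘ₗ F.dualMap ∘ₗ Ω

lemma dagMap_spec (Ω : V →ₗ[ℝ] V →ₗ[ℝ] ℝ) (hnd) (F : V →ₗ[ℝ] V) (x y : V) :
    Ω (dagMap Ω hnd F x) y = Ω x (F y) := by
  have h1 : Ω (dagMap Ω hnd F x) = omegaEquiv Ω hnd (dagMap Ω hnd F x) :=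
    (omegaEquiv_apply Ω hnd _).symm
  rw [h1]
  simp only [dagMap, LinearMap.comp_apply, LinearEquiv.coe_coe]
  rw [LinearEquiv.apply_symm_apply]
  rfl

lemma eq_of_omega (Ω : V →ₗ[ℝ] V →ₗ[ℝ] ℝ)
    (hnd : ∀ x : V, (∀ y : V, Ω x y = 0) → x = 0) {a b : V}
    (h : ∀ y, Ω a y = Ω b y) : a = b := by
  have : ∀ y, Ω (a - b) y = 0 := by
    intro y; rw [map_sub]; simp [LinearMap.sub_apply, h]
  exact sub_eq_zero.mp (hnd _ this)

-- chain rule identity for inverse pairs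
lemma fderiv_comp_inverse {E : Type*} [NormedAddCommGroup E] [NormedSpace ℝ E]
    {g h : E → E} (hgd : Differentiable ℝ g)
    (hhd : Differentiable ℝ h) (hgh : ∀ x, h (g x) = x) (z w : E) :
    fderiv ℝ h (g z) (fderiv ℝ g z w) = w := by
  have hc : fderiv ℝ (h ∘ g) z = (fderiv ℝ h (g z)).comp (fderiv ℝ g z) :=
    fderiv_comp z (hhd _) (hgd _)
  have h2 : (h ∘ g) = id := funext hgh
  rw [h2, fderiv_id] at hc
  calc fderiv ℝ h (g z) (fderiv ℝ g z w)
      = ((fderiv ℝ h (g z)).comp (fderiv ℝ g z)) w := rfl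
    _ = w := by rw [← hc]; rfl

end Aux2

section Core
variable {V : Type*} [NormedAddCommGroup V] [NormedSpace ℝ V] [FiniteDimensional ℝ V]
variable {Ω : V →ₗ[ℝ] V →ₗ[ℝ] ℝ} {A P : V →ₗ[ℝ] V}

/-- continuous bilinear version of Ω -/
noncomputable def omC (Ω : V →ₗ[ℝ] V →ₗ[ℝ] ℝ) : V →L[ℝ] V →L[ℝ] ℝ :=
  LinearMap.toContinuousLinearMap
    ((LinearMap.toContinuousLinearMap : (V →ₗ[ℝ] ℝ) ≃ₗ[ℝ] (V →L[ℝ] ℝ)).toLinearMap ∘ₗ Ω)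

@[simp] lemma omC_apply (Ω : V →ₗ[ℝ] V →ₗ[ℝ] ℝ) (x y : V) : omC Ω x y = Ω x y := by
  simp [omC]

/-- The reduced Liouville identity. -/
lemma liouvilleP (S : SympSetup Ω A P) {g : V → V}
    (hL : ∀ z v : V, Ω (g z - A (g z)) (fderiv ℝ g z v) = Ω (z - A z) v)
    (z v : V) : Ω (g z - P (g z)) (fderiv ℝ g z v) = Ω (z - P z) v := by
  have h := hL z v
  rw [S.sub_A_eq (g z), S.sub_A_eq z] at h
  simp only [map_smul, LinearMap.smul_apply, smul_eq_mul] at h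
  linarith

/-- Symplecticity of the derivative. -/
lemma symplectic_deriv (S : SympSetup Ω A P) {g : V → V}
    (hg : ContDiff ℝ (⊤ : ℕ∞) g)
    (hL : ∀ z v : V, Ω (g z - A (g z)) (fderiv ℝ g z v) = Ω (z - A z) v)
    (z u v : V) : Ω (fderiv ℝ g z u) (fderiv ℝ g z v) = Ω u v := by
  have hgd : Differentiable ℝ g := hg.differentiable (by simp)
  set φ : V → (V →L[ℝ] V) := fderiv ℝ g with hφdef
  have hφ : ContDiff ℝ (⊤ : ℕ∞) φ := hg.fderiv_right (by exact_mod_cast le_top)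
  have hφd : Differentiable ℝ φ := hφ.differentiable (by simp)
  set QmL : V →L[ℝ] V := ContinuousLinearMap.id ℝ V - P.toContinuousLinearMap with hQ
  have hQap : ∀ x : V, QmL x = x - P x := fun x => by
    simp [hQ, ContinuousLinearMap.sub_apply]
  have key : ∀ u v : V,
      Ω (φ z u - P (φ z u)) (φ z v) + Ω (g z - P (g z)) (fderiv ℝ φ z u v)
        = Ω (u - P u) v := by
    intro u v
    have hc : HasFDerivAt (fun y => ((omC Ω).comp QmL) (g y)) ((((omC Ω).comp QmL)).comp (φ z)) z :=
      (((omC Ω).comp QmL).hasFDerivAt).comp z (hgd z).hasFDerivAt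
    have hu : HasFDerivAt (fun y => φ y v)
        ((φ z).comp (0 : V →L[ℝ] V) + (fderiv ℝ φ z).flip v) z :=
      HasFDerivAt.clm_apply (hφd z).hasFDerivAt (hasFDerivAt_const v z)
    have hmain : HasFDerivAt (fun y => (((omC Ω).comp QmL) (g y)) (φ y v))
        ((((omC Ω).comp QmL) (g z)).comp ((φ z).comp (0 : V →L[ℝ] V) + (fderiv ℝ φ z).flip v)
          + ((((omC Ω).comp QmL)).comp (φ z)).flip (φ z v)) z :=
      HasFDerivAt.clm_apply hc hu
    have heqfun : (fun y => (((omC Ω).comp QmL) (g y)) (φ y v))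
        = fun y => (((omC Ω).flip v).comp QmL) y := by
      funext y
      simp only [ContinuousLinearMap.comp_apply, ContinuousLinearMap.flip_apply, omC_apply, hQap]
      exact liouvilleP S hL y v
    rw [heqfun] at hmain
    have huniq := hmain.unique (((omC Ω).flip v).comp QmL).hasFDerivAt
    have happ := ContinuousLinearMap.ext_iff.mp huniq u
    simp only [ContinuousLinearMap.add_apply, ContinuousLinearMap.comp_apply,
      ContinuousLinearMap.flip_apply, ContinuousLinearMap.zero_apply, map_zero,
      ContinuousLinearMap.comp_zero, zero_add, omC_apply, hQap] at happ
    linarith [happ]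
  have hsymm : fderiv ℝ φ z u v = fderiv ℝ φ z v u :=
    second_derivative_symmetric (fun y => (hgd y).hasFDerivAt) (hφd z).hasFDerivAt u v
  have k1 := key u v
  have k2 := key v u
  rw [hsymm] at k1
  have q1 := S.qm_identity (φ z u) (φ z v)
  have q2 := S.qm_identity u v
  linarith
end Core

section Core2
variable {V : Type*} [NormedAddCommGroup V] [NormedSpace ℝ V] [FiniteDimensional ℝ V]
variable {Ω : V →ₗ[ℝ] V →ₗ[ℝ] ℝ} {A P : V →ₗ[ℝ] V}

/-- Key identity: `Dg_z(z₋) = (g z)₋`. -/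
lemma K_identity (S : SympSetup Ω A P) {g h : V → V}
    (hg : ContDiff ℝ (⊤ : ℕ∞) g) (hh : ContDiff ℝ (⊤ : ℕ∞) h)
    (hlg : Function.LeftInverse h g) (hrg : Function.RightInverse h g)
    (hL : ∀ z v : V, Ω (g z - A (g z)) (fderiv ℝ g z v) = Ω (z - A z) v)
    (z : V) : fderiv ℝ g z (z - P z) = g z - P (g z) := by
  have hgd : Differentiable ℝ g := hg.differentiable (by simp)
  have hhd : Differentiable ℝ h := hh.differentiable (by simp)
  refine eq_of_omega Ω S.nd fun y => ?_
  have hsurj : fderiv ℝ g z (fderiv ℝ h (g z) y) = y := by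
    have : g (h (g z)) = g z := by rw [hlg z]
    have h1 := fderiv_comp_inverse hhd hgd (fun x => hrg x) (g z) y
    rw [hlg z] at h1
    exact h1
  set w := fderiv ℝ h (g z) y with hw
  have h1 : Ω (fderiv ℝ g z (z - P z)) (fderiv ℝ g z w) = Ω (z - P z) w :=
    symplectic_deriv S hg hL z (z - P z) w
  have h2 : Ω (g z - P (g z)) (fderiv ℝ g z w) = Ω (z - P z) w :=
    liouvilleP S hL z w
  rw [hsurj] at h1 h2
  rw [h1, h2]

/-- `g` commutes with the projection `P`. -/
lemma Pg_commute (S : SympSetup Ω A P) {g h : V → V}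
    (hg : ContDiff ℝ (⊤ : ℕ∞) g) (hh : ContDiff ℝ (⊤ : ℕ∞) h)
    (hlg : Function.LeftInverse h g) (hrg : Function.RightInverse h g)
    (hL : ∀ z v : V, Ω (g z - A (g z)) (fderiv ℝ g z v) = Ω (z - A z) v)
    (z : V) : P (g z) = g (P z) := by
  have hgd : Differentiable ℝ g := hg.differentiable (by simp)
  -- step B : g maps V₊ to V₊
  have hB : ∀ x : V, P x = x → P (g x) = g x := by
    intro x hx
    have := K_identity S hg hh hlg hrg hL x
    rw [hx, sub_self, map_zero] at this
    have := this.symm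
    rw [sub_eq_zero] at this
    exact this.symm
  -- flow argument
  set ζ : ℝ → V := fun t => P z + t • (z - P z) with hζ
  have hζd : ∀ t : ℝ, HasDerivAt ζ (z - P z) t := by
    intro t
    have h1 : HasDerivAt (fun t : ℝ => t • (z - P z)) ((1:ℝ) • (z - P z)) t :=
      (hasDerivAt_id t).smul_const (z - P z)
    have h2 := h1.const_add (P z); rw [one_smul] at h2; exact h2
  have hPζ : ∀ t, P (ζ t) = P z := by
    intro t
    simp only [hζ, map_add, map_smul, S.PP, S.PQ, smul_zero, add_zero]
  have hQζ : ∀ t, ζ t - P (ζ t) = t • (z - P z) := by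
    intro t; rw [hPζ t]; simp only [hζ]; abel
  have hcd : ∀ t : ℝ, HasDerivAt (fun t => g (ζ t)) (fderiv ℝ g (ζ t) (z - P z)) t :=
    fun t => (hgd (ζ t)).hasFDerivAt.comp_hasDerivAt t (hζd t)
  have hKt : ∀ t : ℝ, t • (fderiv ℝ g (ζ t) (z - P z)) = g (ζ t) - P (g (ζ t)) := by
    intro t
    have := K_identity S hg hh hlg hrg hL (ζ t)
    rw [hQζ t, map_smul] at this
    exact this
  set k : ℝ → V := fun t => P (fderiv ℝ g (ζ t) (z - P z)) with hk
  have hk0 : ∀ t : ℝ, t ≠ 0 → k t = 0 := by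
    intro t ht
    have h2 := congrArg P (hKt t)
    rw [map_smul, S.PQ] at h2
    rcases smul_eq_zero.mp h2 with h | h
    · exact absurd h ht
    · exact h
  have hφ : ContDiff ℝ (⊤ : ℕ∞) (fderiv ℝ g) := hg.fderiv_right (by exact_mod_cast le_top)
  have hkc : Continuous k := by
    apply P.toContinuousLinearMap.continuous.comp
    have h1 : Continuous fun t : ℝ => fderiv ℝ g (ζ t) := by
      apply (hφ.continuous).comp
      simp only [hζ]
      continuity
    exact h1.clm_apply continuous_const
  have hkall : ∀ t, k t = 0 := by
    have hd : Dense ({(0:ℝ)}ᶜ) := dense_compl_singleton 0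
    have := Continuous.ext_on hd hkc continuous_const
      (fun t ht => hk0 t (by simpa using ht))
    intro t
    exact congrFun this t
  set u : ℝ → V := fun t => P (g (ζ t)) with hu
  have hud : ∀ t : ℝ, HasDerivAt u (k t) t := by
    intro t
    exact P.toContinuousLinearMap.hasFDerivAt.comp_hasDerivAt t (hcd t)
  have hconst : u 1 = u 0 := by
    apply is_const_of_deriv_eq_zero
    · exact fun t => (hud t).differentiableAt
    · intro t
      rw [(hud t).deriv]
      exact hkall t
  have hζ1 : ζ 1 = z := by simp [hζ]
  have hζ0 : ζ 0 = P z := by simp [hζ]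
  have e1 : u 1 = P (g z) := by simp only [hu]; rw [hζ1]
  have e0 : u 0 = P (g (P z)) := by simp only [hu]; rw [hζ0]
  rw [← e1, hconst, e0, hB (P z) (S.PP z)]

/-- the inverse also preserves Liouville -/
lemma liouville_inverse {g h : V → V}
    (hg : ContDiff ℝ (⊤ : ℕ∞) g) (hh : ContDiff ℝ (⊤ : ℕ∞) h)
    (hlg : Function.LeftInverse h g) (hrg : Function.RightInverse h g)
    (hL : ∀ z v : V, Ω (g z - A (g z)) (fderiv ℝ g z v) = Ω (z - A z) v)
    (w v : V) : Ω (h w - A (h w)) (fderiv ℝ h w v) = Ω (w - A w) v := by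
  have hgd : Differentiable ℝ g := hg.differentiable (by simp)
  have hhd : Differentiable ℝ h := hh.differentiable (by simp)
  have h1 := hL (h w) (fderiv ℝ h w v)
  have h2 : fderiv ℝ g (h w) (fderiv ℝ h w v) = v := fderiv_comp_inverse hhd hgd (fun x => hrg x) w v
  rw [hrg w, h2] at h1
  exact h1.symm
end Core2

section Dir2
variable {V : Type*} [NormedAddCommGroup V] [NormedSpace ℝ V] [FiniteDimensional ℝ V]
variable {Ω : V →ₗ[ℝ] V →ₗ[ℝ] ℝ} {A P : V →ₗ[ℝ] V}

/-- the canonical `f` associated to `g` -/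
noncomputable def fcan (P : V →ₗ[ℝ] V) (Vp : Submodule ℝ V) (hPr : ∀ z : V, P z ∈ Vp)
    (g : V → V) (x : Vp) : Vp := ⟨P (g ↑x), hPr _⟩

lemma fcan_smooth (P : V →ₗ[ℝ] V) (Vp : Submodule ℝ V) (hPr : ∀ z : V, P z ∈ Vp)
    {g : V → V} (hg : ContDiff ℝ (⊤ : ℕ∞) g) :
    ContDiff ℝ (⊤ : ℕ∞) (fcan P Vp hPr g) := by
  have : fcan P Vp hPr g = fun x : Vp =>
      (LinearMap.toContinuousLinearMap (P.codRestrict Vp hPr)) (g (Vp.subtypeL x)) := by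
    funext x
    apply Subtype.ext
    simp [fcan]
  rw [this]
  exact (LinearMap.toContinuousLinearMap (P.codRestrict Vp hPr)).contDiff.comp
    (hg.comp Vp.subtypeL.contDiff)

/-- derivative of the canonical f -/
lemma fcan_fderiv (P : V →ₗ[ℝ] V) (Vp : Submodule ℝ V) (hPr : ∀ z : V, P z ∈ Vp)
    {g : V → V} (hg : ContDiff ℝ (⊤ : ℕ∞) g) (x u : Vp) :
    (fderiv ℝ (fcan P Vp hPr g) x u : V) = P (fderiv ℝ g ↑x ↑u) := by
  have hgd : Differentiable ℝ g := hg.differentiable (by simp)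
  have hfc : Differentiable ℝ (fcan P Vp hPr g) :=
    (fcan_smooth P Vp hPr hg).differentiable (by simp)
  set PL := P.toContinuousLinearMap with hPL
  have h1 : HasFDerivAt (fun y : Vp => ((fcan P Vp hPr g y : V)))
      (Vp.subtypeL.comp (fderiv ℝ (fcan P Vp hPr g) x)) x :=
    Vp.subtypeL.hasFDerivAt.comp x (hfc x).hasFDerivAt
  have h2 : HasFDerivAt (fun y : Vp => PL (g (Vp.subtypeL y)))
      ((PL.comp (fderiv ℝ g ↑x)).comp Vp.subtypeL) x :=
    ((PL.hasFDerivAt.comp (x : V) (hgd ↑x).hasFDerivAt).comp x Vp.subtypeL.hasFDerivAt)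
  have heq : (fun y : Vp => ((fcan P Vp hPr g y : V))) = fun y : Vp => PL (g (Vp.subtypeL y)) := by
    funext y; simp [fcan, hPL]
  rw [heq] at h1
  have := h1.unique h2
  have happ := congrArg (fun (T : Vp →L[ℝ] V) => T u) this
  simpa [hPL] using happ

/-- the main direction-2 package -/
lemma dir2_main (S : SympSetup Ω A P)
    (hPr : ∀ z : V, P z ∈ LinearMap.ker (A - LinearMap.id))
    {g h : V → V}
    (hg : ContDiff ℝ (⊤ : ℕ∞) g) (hh : ContDiff ℝ (⊤ : ℕ∞) h)
    (hlg : Function.LeftInverse h g) (hrg : Function.RightInverse h g)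
    (hL : PreservesLiouville Ω A g) :
    IsDiffeo (fcan P (LinearMap.ker (A - LinearMap.id)) hPr g) ∧
    GivenByRule Ω (LinearMap.ker (A - LinearMap.id)) (LinearMap.ker (A + LinearMap.id))
      P hPr (fcan P (LinearMap.ker (A - LinearMap.id)) hPr g) g := by
  set Vp := LinearMap.ker (A - LinearMap.id) with hVp
  have hgd : Differentiable ℝ g := hg.differentiable (by simp)
  have hLh : PreservesLiouville Ω A h := fun w v => liouville_inverse hg hh hlg hrg hL w v
  have hPg : ∀ z, P (g z) = g (P z) := Pg_commute S hg hh hlg hrg hL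
  have hPh : ∀ z, P (h z) = h (P z) := Pg_commute S hh hg hrg hlg hLh
  constructor
  · -- IsDiffeo fcan
    refine ⟨fcan_smooth P Vp hPr hg, fcan P Vp hPr h, fcan_smooth P Vp hPr hh, ?_, ?_⟩
    · intro x
      apply Subtype.ext
      have hx : P (↑x : V) = ↑x := S.projp _ x.2
      have hgx : P (g ↑x) = g ↑x := by rw [hPg, hx]
      simp only [fcan, hgx]
      rw [hlg ↑x]
      exact hx
    · intro x
      apply Subtype.ext
      have hx : P (↑x : V) = ↑x := S.projp _ x.2
      have hhx : P (h ↑x) = h ↑x := by rw [hPh, hx]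
      simp only [fcan, hhx]
      rw [hrg ↑x]
      exact hx
  · -- GivenByRule
    intro z
    have hfz : ((fcan P Vp hPr g ⟨P z, hPr z⟩ : Vp) : V) = P (g z) := by
      simp only [fcan]
      rw [hPg, S.PP, ← hPg]
    constructor
    · rw [hfz]
      exact S.memQ (g z)
    · intro Fdag hFdag
      rw [hfz]
      -- compute Fmap
      have hFm : ∀ y : V, Fmap Vp P hPr (fcan P Vp hPr g) z y = P (fderiv ℝ g z (P y)) := by
        intro y
        have h1 : Fmap Vp P hPr (fcan P Vp hPr g) z y
            = ((fderiv ℝ (fcan P Vp hPr g) ⟨P z, hPr z⟩ ⟨P y, hPr y⟩ : Vp) : V) := rfl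
        rw [h1, fcan_fderiv P Vp hPr hg]
        -- P (fderiv g (P z) (P y)) = P (fderiv g z (P y))
        have hPgf : (fun z => P (g z)) = fun z => g (P z) := funext hPg
        have hd1 : ∀ z w : V, P (fderiv ℝ g z w) = fderiv ℝ g (P z) (P w) := by
          intro z w
          have e1 : HasFDerivAt (fun z => P (g z))
              (P.toContinuousLinearMap.comp (fderiv ℝ g z)) z :=
            P.toContinuousLinearMap.hasFDerivAt.comp z (hgd z).hasFDerivAt
          have e2 : HasFDerivAt (fun z => g (P z))
              ((fderiv ℝ g (P z)).comp P.toContinuousLinearMap) z :=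
            (hgd (P z)).hasFDerivAt.comp z P.toContinuousLinearMap.hasFDerivAt
          rw [hPgf] at e1
          have := e1.unique e2
          have happ := congrArg (fun (T : V →L[ℝ] V) => T w) this
          simpa using happ
        rw [hd1 (P z) (P y), S.PP, hd1 z (P y), S.PP]
      -- main identity
      have hm : ∀ y : V, Ω (g z - P (g z)) (Fmap Vp P hPr (fcan P Vp hPr g) z y)
          = Ω (z - P z) y := by
        intro y
        rw [hFm y]
        have hAm : A (g z - P (g z)) = -(g z - P (g z)) := S.AQ (g z)
        rw [← S.omega_m_reduce hAm (fderiv ℝ g z (P y))]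
        rw [liouvilleP S hL z (P y)]
        exact (S.omega_m_reduce (S.AQ z) y).symm
      refine eq_of_omega Ω S.nd fun y => ?_
      rw [hFdag _ y, hm y]

/-- uniqueness of `f` in the rule: only the membership clause is needed. -/
lemma fcan_unique (S : SympSetup Ω A P)
    (hPr : ∀ z : V, P z ∈ LinearMap.ker (A - LinearMap.id))
    {g : V → V} {f : LinearMap.ker (A - LinearMap.id) → LinearMap.ker (A - LinearMap.id)}
    (hrule : GivenByRule Ω (LinearMap.ker (A - LinearMap.id)) (LinearMap.ker (A + LinearMap.id))
      P hPr f g) :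
    f = fcan P (LinearMap.ker (A - LinearMap.id)) hPr g := by
  funext x
  have hx : P (↑x : V) = ↑x := S.projp _ x.2
  have hmem := (hrule ↑x).1
  have hxx : (⟨P ↑x, hPr ↑x⟩ : LinearMap.ker (A - LinearMap.id)) = x := Subtype.ext hx
  rw [hxx] at hmem
  have h0 := S.projm _ hmem
  rw [map_sub, S.projp _ (f x).2] at h0
  apply Subtype.ext
  simp only [fcan]
  have := sub_eq_zero.mp h0
  exact this.symm
end Dir2

section Dir1
variable {V : Type*} [NormedAddCommGroup V] [NormedSpace ℝ V] [FiniteDimensional ℝ V]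

/-- conjugated dagger, as a linear map on operator spaces -/
noncomputable def conjL (Ω : V →ₗ[ℝ] V →ₗ[ℝ] ℝ)
    (hnd : ∀ x : V, (∀ y : V, Ω x y = 0) → x = 0)
    (Vp : Submodule ℝ V) (P : V →ₗ[ℝ] V) (hPr : ∀ z : V, P z ∈ Vp) :
    (Vp →L[ℝ] Vp) →ₗ[ℝ] (V →L[ℝ] V) where
  toFun T := LinearMap.toContinuousLinearMap
    (dagMap Ω hnd (Vp.subtype ∘ₗ ((T : Vp →ₗ[ℝ] Vp) ∘ₗ P.codRestrict Vp hPr)))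
  map_add' T T' := by
    apply ContinuousLinearMap.ext; intro x
    simp only [LinearMap.coe_toContinuousLinearMap', ContinuousLinearMap.add_apply]
    refine eq_of_omega Ω hnd fun y => ?_
    rw [map_add, LinearMap.add_apply, dagMap_spec, dagMap_spec, dagMap_spec]
    simp only [LinearMap.comp_apply, ContinuousLinearMap.coe_coe,
      ContinuousLinearMap.add_apply, Submodule.coe_subtype, Submodule.coe_add, map_add]
  map_smul' c T := by
    apply ContinuousLinearMap.ext; intro x
    simp only [LinearMap.coe_toContinuousLinearMap', RingHom.id_apply,
      ContinuousLinearMap.smul_apply]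
    refine eq_of_omega Ω hnd fun y => ?_
    rw [map_smul, LinearMap.smul_apply, dagMap_spec, dagMap_spec]
    simp only [LinearMap.comp_apply, ContinuousLinearMap.coe_coe,
      ContinuousLinearMap.smul_apply, SetLike.val_smul, Submodule.coe_subtype, map_smul,
      smul_eq_mul]

lemma conjL_apply (Ω : V →ₗ[ℝ] V →ₗ[ℝ] ℝ) (hnd) (Vp : Submodule ℝ V) (P : V →ₗ[ℝ] V)
    (hPr : ∀ z : V, P z ∈ Vp) (T : Vp →L[ℝ] Vp) (v : V) :
    conjL Ω hnd Vp P hPr T v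
      = dagMap Ω hnd (Vp.subtype ∘ₗ ((T : Vp →ₗ[ℝ] Vp) ∘ₗ P.codRestrict Vp hPr)) v := by
  simp [conjL]

/-- the rule-map `g` built from `f` (with chosen inverse `f'`). -/
noncomputable def Gmap (Ω : V →ₗ[ℝ] V →ₗ[ℝ] ℝ)
    (hnd : ∀ x : V, (∀ y : V, Ω x y = 0) → x = 0)
    (Vp : Submodule ℝ V) (P : V →ₗ[ℝ] V) (hPr : ∀ z : V, P z ∈ Vp)
    (f f' : Vp → Vp) (z : V) : V :=
  ↑(f ⟨P z, hPr z⟩) + dagMap Ω hnd (Fmap Vp P hPr f' ↑(f ⟨P z, hPr z⟩)) (z - P z)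

lemma Fmap_eq_conj (Ω : V →ₗ[ℝ] V →ₗ[ℝ] ℝ) (hnd) (Vp : Submodule ℝ V) (P : V →ₗ[ℝ] V)
    (hPr : ∀ z : V, P z ∈ Vp) (q : Vp → Vp) (w : V) :
    dagMap Ω hnd (Fmap Vp P hPr q w)
      = (conjL Ω hnd Vp P hPr (fderiv ℝ q ⟨P w, hPr w⟩) : V → V) := by
  funext v
  rw [conjL_apply]
  rfl

lemma Gmap_part2_smooth (Ω : V →ₗ[ℝ] V →ₗ[ℝ] ℝ)
    (hnd : ∀ x : V, (∀ y : V, Ω x y = 0) → x = 0)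
    (Vp : Submodule ℝ V) (P : V →ₗ[ℝ] V) (hPr : ∀ z : V, P z ∈ Vp)
    {f f' : Vp → Vp} (hf : ContDiff ℝ (⊤ : ℕ∞) f) (hf' : ContDiff ℝ (⊤ : ℕ∞) f') :
    ContDiff ℝ (⊤ : ℕ∞)
      (fun z : V => dagMap Ω hnd (Fmap Vp P hPr f' ↑(f ⟨P z, hPr z⟩)) (z - P z)) := by
  set PcL := LinearMap.toContinuousLinearMap (P.codRestrict Vp hPr) with hPcL
  have hPcLap : ∀ v : V, PcL v = ⟨P v, hPr v⟩ := fun v => rfl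
  have hpart2 : ContDiff ℝ (⊤ : ℕ∞)
      (fun z : V => dagMap Ω hnd (Fmap Vp P hPr f' ↑(f ⟨P z, hPr z⟩)) (z - P z)) := by
    have hrw : (fun z : V => dagMap Ω hnd (Fmap Vp P hPr f' ↑(f ⟨P z, hPr z⟩)) (z - P z))
        = fun z : V => ((LinearMap.toContinuousLinearMap (conjL Ω hnd Vp P hPr))
            (fderiv ℝ f' (PcL (Vp.subtypeL (f (PcL z)))))) (z - P z) := by
      funext z
      rw [Fmap_eq_conj Ω hnd Vp P hPr f' (↑(f ⟨P z, hPr z⟩))]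
      simp only [LinearMap.coe_toContinuousLinearMap']
      rfl
    rw [hrw]
    have hconjC : ContDiff ℝ (⊤ : ℕ∞) (⇑(conjL Ω hnd Vp P hPr)) := by
      have h : ContDiff ℝ ((⊤ : ℕ∞) : WithTop ℕ∞)
          ⇑(LinearMap.toContinuousLinearMap (conjL Ω hnd Vp P hPr)) :=
        ContinuousLinearMap.contDiff (𝕜 := ℝ) (E := Vp →L[ℝ] Vp) (F := V →L[ℝ] V)
          (LinearMap.toContinuousLinearMap (conjL Ω hnd Vp P hPr))
      rwa [LinearMap.coe_toContinuousLinearMap'] at h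
    have hc1 : ContDiff ℝ (⊤ : ℕ∞) (fun z : V =>
        (LinearMap.toContinuousLinearMap (conjL Ω hnd Vp P hPr))
          (fderiv ℝ f' (PcL (Vp.subtypeL (f (PcL z)))))) := by
      simp only [LinearMap.coe_toContinuousLinearMap']
      exact hconjC.comp ((hf'.fderiv_right (by exact_mod_cast le_top)).comp
        (PcL.contDiff.comp (Vp.subtypeL.contDiff.comp (hf.comp PcL.contDiff))))
    have hc2 : ContDiff ℝ (⊤ : ℕ∞) (fun z : V => z - P z) :=
      contDiff_id.sub P.toContinuousLinearMap.contDiff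
    exact hc1.clm_apply hc2
  exact hpart2

lemma Gmap_smooth (Ω : V →ₗ[ℝ] V →ₗ[ℝ] ℝ)
    (hnd : ∀ x : V, (∀ y : V, Ω x y = 0) → x = 0)
    (Vp : Submodule ℝ V) (P : V →ₗ[ℝ] V) (hPr : ∀ z : V, P z ∈ Vp)
    {f f' : Vp → Vp} (hf : ContDiff ℝ (⊤ : ℕ∞) f) (hf' : ContDiff ℝ (⊤ : ℕ∞) f') :
    ContDiff ℝ (⊤ : ℕ∞) (Gmap Ω hnd Vp P hPr f f') := by
  set PcL := LinearMap.toContinuousLinearMap (P.codRestrict Vp hPr) with hPcL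
  have hPcLap : ∀ v : V, PcL v = ⟨P v, hPr v⟩ := fun v => rfl
  have hpart1 : ContDiff ℝ (⊤ : ℕ∞) (fun z : V => ((f ⟨P z, hPr z⟩ : Vp) : V)) := by
    have : (fun z : V => ((f ⟨P z, hPr z⟩ : Vp) : V))
        = fun z : V => Vp.subtypeL (f (PcL z)) := by
      funext z; rw [hPcLap]; rfl
    rw [this]
    exact Vp.subtypeL.contDiff.comp (hf.comp PcL.contDiff)
  exact hpart1.add (Gmap_part2_smooth Ω hnd Vp P hPr hf hf')
end Dir1

section Dir1b
variable {V : Type*} [NormedAddCommGroup V] [NormedSpace ℝ V] [FiniteDimensional ℝ V]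
variable {Ω : V →ₗ[ℝ] V →ₗ[ℝ] ℝ} {A P : V →ₗ[ℝ] V}

lemma liouvilleP_rev (S : SympSetup Ω A P) {g : V → V}
    (h : ∀ z v : V, Ω (g z - P (g z)) (fderiv ℝ g z v) = Ω (z - P z) v) :
    PreservesLiouville Ω A g := by
  intro z v
  rw [S.sub_A_eq (g z), S.sub_A_eq z]
  simp only [map_smul, LinearMap.smul_apply, smul_eq_mul]
  have := h z v
  linarith

/-- `dagMap` of a map killing `V₋` lands in `V₋`. -/
lemma dag_minus (S : SympSetup Ω A P) {F : V →ₗ[ℝ] V}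
    (hker : ∀ y : V, A y = -y → F y = 0) (x : V) :
    P (dagMap Ω S.nd F x) = 0 := by
  set d := dagMap Ω S.nd F x with hd
  have h1 : ∀ u : V, A u = -u → Ω d u = 0 := by
    intro u hu
    rw [hd, dagMap_spec, hker u hu, map_zero]
  have h2 : ∀ u : V, A u = -u → Ω (P d) u = 0 := by
    intro u hu
    have hs := S.split1 d u
    have hm : Ω (d - P d) u = 0 := S.minus_minus (S.AQ d) hu
    have := h1 u hu
    linarith
  exact S.plus_zero (S.AP d) h2

lemma Fmap_minus (S : SympSetup Ω A P)
    (hPr : ∀ z : V, P z ∈ LinearMap.ker (A - LinearMap.id))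
    (q : LinearMap.ker (A - LinearMap.id) → LinearMap.ker (A - LinearMap.id)) (w y : V)
    (hy : A y = -y) : Fmap (LinearMap.ker (A - LinearMap.id)) P hPr q w y = 0 := by
  have hy0 : P y = 0 := S.projm _ ((S.memVm_iff y).mpr hy)
  have h1 : (⟨P y, hPr y⟩ : LinearMap.ker (A - LinearMap.id)) = 0 := by
    apply Subtype.ext; simpa using hy0
  show ((fderiv ℝ q ⟨P w, hPr w⟩ ⟨P y, hPr y⟩ : LinearMap.ker (A - LinearMap.id)) : V) = 0
  rw [h1, map_zero]
  rfl

lemma Fmap_base_congr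
    (hPr : ∀ z : V, P z ∈ LinearMap.ker (A - LinearMap.id))
    (q : LinearMap.ker (A - LinearMap.id) → LinearMap.ker (A - LinearMap.id)) {w w' : V}
    (h : (⟨P w, hPr w⟩ : LinearMap.ker (A - LinearMap.id)) = ⟨P w', hPr w'⟩) :
    Fmap (LinearMap.ker (A - LinearMap.id)) P hPr q w
      = Fmap (LinearMap.ker (A - LinearMap.id)) P hPr q w' := by
  unfold Fmap
  rw [h]

lemma Fmap_FF (S : SympSetup Ω A P)
    (hPr : ∀ z : V, P z ∈ LinearMap.ker (A - LinearMap.id))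
    {q q' : LinearMap.ker (A - LinearMap.id) → LinearMap.ker (A - LinearMap.id)}
    (hqd : Differentiable ℝ q) (hq'd : Differentiable ℝ q')
    (hlq : ∀ u, q' (q u) = u)
    (z y : V) :
    Fmap (LinearMap.ker (A - LinearMap.id)) P hPr q' ↑(q ⟨P z, hPr z⟩)
      (Fmap (LinearMap.ker (A - LinearMap.id)) P hPr q z y) = P y := by
  have hb1 : (⟨P ↑(q ⟨P z, hPr z⟩), hPr _⟩ : LinearMap.ker (A - LinearMap.id))
      = q ⟨P z, hPr z⟩ := Subtype.ext (S.projp _ (q ⟨P z, hPr z⟩).2)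
  have h1 : Fmap (LinearMap.ker (A - LinearMap.id)) P hPr q z y
      = ↑(fderiv ℝ q ⟨P z, hPr z⟩ ⟨P y, hPr y⟩) := rfl
  have h2 : ∀ v : V, Fmap (LinearMap.ker (A - LinearMap.id)) P hPr q' ↑(q ⟨P z, hPr z⟩) v
      = ↑(fderiv ℝ q' ⟨P ↑(q ⟨P z, hPr z⟩), hPr _⟩ ⟨P v, hPr v⟩) := fun v => rfl
  rw [h1, h2]
  have hb3 : (⟨P ↑(fderiv ℝ q ⟨P z, hPr z⟩ ⟨P y, hPr y⟩ : LinearMap.ker (A - LinearMap.id)),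
        hPr _⟩ : LinearMap.ker (A - LinearMap.id))
      = fderiv ℝ q ⟨P z, hPr z⟩ ⟨P y, hPr y⟩ :=
    Subtype.ext (S.projp _ (fderiv ℝ q ⟨P z, hPr z⟩ ⟨P y, hPr y⟩ :
      LinearMap.ker (A - LinearMap.id)).2)
  rw [hb3, hb1]
  rw [fderiv_comp_inverse hqd hq'd hlq ⟨P z, hPr z⟩ ⟨P y, hPr y⟩]
end Dir1b

section Dir1c
variable {V : Type*} [NormedAddCommGroup V] [NormedSpace ℝ V] [FiniteDimensional ℝ V]
variable {Ω : V →ₗ[ℝ] V →ₗ[ℝ] ℝ} {A P : V →ₗ[ℝ] V}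

lemma Gmap_pack (S : SympSetup Ω A P)
    (hPr : ∀ z : V, P z ∈ LinearMap.ker (A - LinearMap.id))
    {f f' : LinearMap.ker (A - LinearMap.id) → LinearMap.ker (A - LinearMap.id)}
    (hf : ContDiff ℝ (⊤ : ℕ∞) f) (hf' : ContDiff ℝ (⊤ : ℕ∞) f')
    (hlf : Function.LeftInverse f' f) (hrf : Function.RightInverse f' f) :
    (∀ z : V, P (Gmap Ω S.nd (LinearMap.ker (A - LinearMap.id)) P hPr f f' z)
        = ↑(f ⟨P z, hPr z⟩)) ∧
    GivenByRule Ω (LinearMap.ker (A - LinearMap.id)) (LinearMap.ker (A + LinearMap.id)) P hPr f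
      (Gmap Ω S.nd (LinearMap.ker (A - LinearMap.id)) P hPr f f') ∧
    PreservesLiouville Ω A (Gmap Ω S.nd (LinearMap.ker (A - LinearMap.id)) P hPr f f') ∧
    (∀ z : V, Gmap Ω S.nd (LinearMap.ker (A - LinearMap.id)) P hPr f' f
        (Gmap Ω S.nd (LinearMap.ker (A - LinearMap.id)) P hPr f f' z) = z) := by
  have hfd : Differentiable ℝ f := hf.differentiable (by simp)
  have hf'd : Differentiable ℝ f' := hf'.differentiable (by simp)
  set m : V → V := fun z =>
    dagMap Ω S.nd (Fmap (LinearMap.ker (A - LinearMap.id)) P hPr f' ↑(f ⟨P z, hPr z⟩)) (z - P z)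
    with hm
  have hGdef : ∀ z : V, Gmap Ω S.nd (LinearMap.ker (A - LinearMap.id)) P hPr f f' z
      = ↑(f ⟨P z, hPr z⟩) + m z := fun z => rfl
  have hmVm : ∀ z : V, P (m z) = 0 := by
    intro z
    apply dag_minus S
    intro y hy
    exact Fmap_minus S hPr f' _ y hy
  have hmA : ∀ z : V, A (m z) = -(m z) := fun z =>
    (S.memVm_iff _).mp ((S.memVm_iffP _).mpr (hmVm z))
  have hPg : ∀ z : V, P (Gmap Ω S.nd (LinearMap.ker (A - LinearMap.id)) P hPr f f' z)
      = ↑(f ⟨P z, hPr z⟩) := by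
    intro z
    rw [hGdef, map_add, hmVm, add_zero, S.projp _ (f ⟨P z, hPr z⟩).2]
  have hgm : ∀ z : V, Gmap Ω S.nd (LinearMap.ker (A - LinearMap.id)) P hPr f f' z
      - P (Gmap Ω S.nd (LinearMap.ker (A - LinearMap.id)) P hPr f f' z) = m z := by
    intro z
    rw [hPg z, hGdef]
    exact add_sub_cancel_left _ _
  have hkey : ∀ z y : V,
      Ω (m z) (Fmap (LinearMap.ker (A - LinearMap.id)) P hPr f z y) = Ω (z - P z) y := by
    intro z y
    rw [hm, dagMap_spec, Fmap_FF S hPr hfd hf'd hlf z y]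
    exact (S.omega_m_reduce (S.AQ z) y).symm
  have hrule : GivenByRule Ω (LinearMap.ker (A - LinearMap.id))
      (LinearMap.ker (A + LinearMap.id)) P hPr f
      (Gmap Ω S.nd (LinearMap.ker (A - LinearMap.id)) P hPr f f') := by
    intro z
    have hsub : Gmap Ω S.nd (LinearMap.ker (A - LinearMap.id)) P hPr f f' z
        - ↑(f ⟨P z, hPr z⟩) = m z := by
      rw [hGdef]; exact add_sub_cancel_left _ _
    constructor
    · rw [hsub]
      exact (S.memVm_iffP _).mpr (hmVm z)
    · intro Fdag hFdag
      rw [hsub]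
      refine eq_of_omega Ω S.nd fun y => ?_
      rw [hFdag, hkey z y]
  refine ⟨hPg, hrule, ?_, ?_⟩
  · -- Liouville
    apply liouvilleP_rev S
    intro z v
    set PcL := LinearMap.toContinuousLinearMap
      (P.codRestrict (LinearMap.ker (A - LinearMap.id)) hPr) with hPcL
    have hp1d : HasFDerivAt (fun z : V => ((f ⟨P z, hPr z⟩ : LinearMap.ker (A - LinearMap.id)) : V))
        ((LinearMap.ker (A - LinearMap.id)).subtypeL.comp
          ((fderiv ℝ f ⟨P z, hPr z⟩).comp PcL)) z := by
      have h1 : HasFDerivAt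
          (⇑(LinearMap.ker (A - LinearMap.id)).subtypeL ∘ f ∘ ⇑PcL)
          ((LinearMap.ker (A - LinearMap.id)).subtypeL.comp
            ((fderiv ℝ f (PcL z)).comp PcL)) z :=
        (LinearMap.ker (A - LinearMap.id)).subtypeL.hasFDerivAt.comp z
          ((hfd (PcL z)).hasFDerivAt.comp z PcL.hasFDerivAt)
      exact h1
    have hp2s : ContDiff ℝ (⊤ : ℕ∞) m :=
      Gmap_part2_smooth Ω S.nd (LinearMap.ker (A - LinearMap.id)) P hPr hf hf'
    have hp2d : Differentiable ℝ m := hp2s.differentiable (by simp)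
    have hfg : fderiv ℝ (Gmap Ω S.nd (LinearMap.ker (A - LinearMap.id)) P hPr f f') z v
        = Fmap (LinearMap.ker (A - LinearMap.id)) P hPr f z v + fderiv ℝ m z v := by
      have hfun : Gmap Ω S.nd (LinearMap.ker (A - LinearMap.id)) P hPr f f'
          = fun z => ((f ⟨P z, hPr z⟩ : LinearMap.ker (A - LinearMap.id)) : V) + m z :=
        funext hGdef
      rw [hfun, fderiv_fun_add (hp1d.differentiableAt) (hp2d z)]
      rw [ContinuousLinearMap.add_apply, hp1d.fderiv]
      rfl
    rw [hgm z, hfg, map_add]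
    have h2 : Ω (m z) (fderiv ℝ m z v) = 0 := by
      set QmL : V →L[ℝ] V := ContinuousLinearMap.id ℝ V - P.toContinuousLinearMap with hQL
      have hQap : ∀ x : V, QmL x = x - P x := fun x => by
        simp [hQL, ContinuousLinearMap.sub_apply]
      have e1 : HasFDerivAt m (QmL.comp (fderiv ℝ m z)) z := by
        have h := QmL.hasFDerivAt.comp z (hp2d z).hasFDerivAt
        have hre' : (⇑QmL ∘ m) = m := by
          funext w
          show QmL (m w) = m w
          rw [hQap, hmVm w, sub_zero]
        rwa [hre'] at h
      have heq : fderiv ℝ m z v = fderiv ℝ m z v - P (fderiv ℝ m z v) := by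
        conv_lhs => rw [e1.fderiv]
        rw [ContinuousLinearMap.comp_apply, hQap]
      rw [heq]
      exact S.minus_minus (hmA z) (S.AQ _)
    rw [hkey z v, h2, add_zero]
  · -- left inverse
    intro z
    have hPgz : P (Gmap Ω S.nd (LinearMap.ker (A - LinearMap.id)) P hPr f f' z)
        = ↑(f ⟨P z, hPr z⟩) := hPg z
    have hx2 : (⟨P (Gmap Ω S.nd (LinearMap.ker (A - LinearMap.id)) P hPr f f' z), hPr _⟩
        : LinearMap.ker (A - LinearMap.id)) = f ⟨P z, hPr z⟩ := Subtype.ext hPgz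
    have hGdef' : Gmap Ω S.nd (LinearMap.ker (A - LinearMap.id)) P hPr f' f
          (Gmap Ω S.nd (LinearMap.ker (A - LinearMap.id)) P hPr f f' z)
        = ↑(f' ⟨P (Gmap Ω S.nd (LinearMap.ker (A - LinearMap.id)) P hPr f f' z), hPr _⟩)
          + dagMap Ω S.nd (Fmap (LinearMap.ker (A - LinearMap.id)) P hPr f
              ↑(f' ⟨P (Gmap Ω S.nd (LinearMap.ker (A - LinearMap.id)) P hPr f f' z), hPr _⟩))
            (Gmap Ω S.nd (LinearMap.ker (A - LinearMap.id)) P hPr f f' z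
              - P (Gmap Ω S.nd (LinearMap.ker (A - LinearMap.id)) P hPr f f' z)) := rfl
    rw [hGdef', hx2, hlf ⟨P z, hPr z⟩, hgm z]
    have hD : dagMap Ω S.nd (Fmap (LinearMap.ker (A - LinearMap.id)) P hPr f
        ↑(⟨P z, hPr z⟩ : LinearMap.ker (A - LinearMap.id))) (m z) = z - P z := by
      have hbc : Fmap (LinearMap.ker (A - LinearMap.id)) P hPr f
            ((⟨P z, hPr z⟩ : LinearMap.ker (A - LinearMap.id)) : V)
          = Fmap (LinearMap.ker (A - LinearMap.id)) P hPr f z := by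
        apply Fmap_base_congr hPr f
        exact Subtype.ext (S.PP z)
      rw [hbc]
      refine eq_of_omega Ω S.nd fun y => ?_
      rw [dagMap_spec, hkey z y]
    rw [hD]
    show P z + (z - P z) = z
    abel

lemma Gmap_unique (S : SympSetup Ω A P)
    (hPr : ∀ z : V, P z ∈ LinearMap.ker (A - LinearMap.id))
    {f f' : LinearMap.ker (A - LinearMap.id) → LinearMap.ker (A - LinearMap.id)}
    (hf : ContDiff ℝ (⊤ : ℕ∞) f) (hf' : ContDiff ℝ (⊤ : ℕ∞) f')
    (hlf : Function.LeftInverse f' f) (hrf : Function.RightInverse f' f)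
    {g₂ : V → V}
    (hrule : GivenByRule Ω (LinearMap.ker (A - LinearMap.id))
      (LinearMap.ker (A + LinearMap.id)) P hPr f g₂) :
    g₂ = Gmap Ω S.nd (LinearMap.ker (A - LinearMap.id)) P hPr f f' := by
  have hfd : Differentiable ℝ f := hf.differentiable (by simp)
  have hf'd : Differentiable ℝ f' := hf'.differentiable (by simp)
  have pack := Gmap_pack S hPr hf hf' hlf hrf
  funext z
  set F := Fmap (LinearMap.ker (A - LinearMap.id)) P hPr f z with hF
  have hspec : ∀ x y : V, Ω (dagMap Ω S.nd F x) y = Ω x (F y) := fun x y =>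
    dagMap_spec Ω S.nd F x y
  have h2 := (hrule z).2 (dagMap Ω S.nd F) hspec
  have h1 := (pack.2.1 z).2 (dagMap Ω S.nd F) hspec
  have hmem2 := (hrule z).1
  have hmem1 := (pack.2.1 z).1
  set m₂ := g₂ z - ↑(f ⟨P z, hPr z⟩) with hm2
  set m₁ := Gmap Ω S.nd (LinearMap.ker (A - LinearMap.id)) P hPr f f' z - ↑(f ⟨P z, hPr z⟩)
    with hm1
  have hd0 : dagMap Ω S.nd F (m₂ - m₁) = 0 := by
    rw [map_sub, h1, h2, sub_self]
  have hdmem : A (m₂ - m₁) = -(m₂ - m₁) := by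
    have := Submodule.sub_mem _ hmem2 hmem1
    exact (S.memVm_iff _).mp this
  have hzero : m₂ - m₁ = 0 := by
    apply S.minus_zero hdmem
    intro u hu
    have humem : u ∈ LinearMap.ker (A - LinearMap.id) := (S.memVp_iff u).mpr hu
    -- find y with F y = u
    set yv : LinearMap.ker (A - LinearMap.id) := fderiv ℝ f' (f ⟨P z, hPr z⟩) ⟨u, humem⟩
      with hyv
    have hFy : F ↑yv = u := by
      have hyc : (⟨P ↑yv, hPr _⟩ : LinearMap.ker (A - LinearMap.id)) = yv :=
        Subtype.ext (S.projp _ yv.2)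
      have h1 : F ↑yv = ↑(fderiv ℝ f ⟨P z, hPr z⟩ ⟨P ↑yv, hPr _⟩) := rfl
      rw [h1, hyc, hyv]
      have hcomp := fderiv_comp_inverse hf'd hfd hrf (f ⟨P z, hPr z⟩) ⟨u, humem⟩
      rw [hlf ⟨P z, hPr z⟩] at hcomp
      rw [hcomp]
    have := hspec (m₂ - m₁) ↑yv
    rw [hd0, map_zero, LinearMap.zero_apply] at this
    rw [hFy] at this
    exact this.symm
  have : m₂ = m₁ := sub_eq_zero.mp hzero
  have h3 : g₂ z = ↑(f ⟨P z, hPr z⟩) + m₂ := by rw [hm2]; abel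
  rw [h3, this, hm1]
  abel
end Dir1c

section Final
variable {V : Type*} [NormedAddCommGroup V] [NormedSpace ℝ V] [FiniteDimensional ℝ V]
variable {Ω : V →ₗ[ℝ] V →ₗ[ℝ] ℝ} {A P : V →ₗ[ℝ] V}

lemma liouville_comp {g₁ g₂ : V → V}
    (hg₁ : Differentiable ℝ g₁) (hg₂ : Differentiable ℝ g₂)
    (hL₁ : PreservesLiouville Ω A g₁) (hL₂ : PreservesLiouville Ω A g₂) :
    PreservesLiouville Ω A (g₁ ∘ g₂) := by
  intro z v
  have hc : fderiv ℝ (g₁ ∘ g₂) z = (fderiv ℝ g₁ (g₂ z)).comp (fderiv ℝ g₂ z) :=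
    fderiv_comp z (hg₁ _) (hg₂ z)
  rw [hc]
  have h1 := hL₁ (g₂ z) (fderiv ℝ g₂ z v)
  have h2 := hL₂ z v
  have h0 : Ω ((g₁ ∘ g₂) z - A ((g₁ ∘ g₂) z)) (((fderiv ℝ g₁ (g₂ z)).comp (fderiv ℝ g₂ z)) v)
      = Ω (g₁ (g₂ z) - A (g₁ (g₂ z))) (fderiv ℝ g₁ (g₂ z) (fderiv ℝ g₂ z v)) := rfl
  rw [h0, h1, h2]
end Final


/-- Let `A ∈ sp(V, Ω)` satisfy `A² = +I`, with `V₊ = ker(A − I)`,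
`V₋ = ker(A + I)` and projection `P₊` onto `V₊` along `V₋`. The rule
`g(z) = f(z₊) + [((Df_{z₊} ∘ P₊)†)|_{V₋}]⁻¹(z₋)` defines a group isomorphism
`Diff(V₊) → Aut(V, θ^A)`: each diffeomorphism `f` of `V₊` yields a unique diffeomorphism
`g` of `V` preserving `θ^A`, every such `g` arises from a unique `f`, and composition of
`f`'s corresponds to composition of `g`'s. -/
theorem stmt_16 {V : Type*} [NormedAddCommGroup V] [NormedSpace ℝ V] [FiniteDimensional ℝ V]
    (Ω : V →ₗ[ℝ] V →ₗ[ℝ] ℝ)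
    (hΩalt : ∀ x : V, Ω x x = 0)
    (hΩnd : ∀ x : V, (∀ y : V, Ω x y = 0) → x = 0)
    (A : V →ₗ[ℝ] V) (hA : ∀ x y : V, Ω (A x) y + Ω x (A y) = 0)
    (hA2 : A ∘ₗ A = LinearMap.id)
    (P : V →ₗ[ℝ] V) (hPr : ∀ z : V, P z ∈ LinearMap.ker (A - LinearMap.id))
    (hPp : ∀ x ∈ LinearMap.ker (A - LinearMap.id), P x = x)
    (hPm : ∀ x ∈ LinearMap.ker (A + LinearMap.id), P x = 0) :
    (∀ f : LinearMap.ker (A - LinearMap.id) → LinearMap.ker (A - LinearMap.id),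
      IsDiffeo f →
      ∃! g : V → V, (IsDiffeo g ∧ PreservesLiouville Ω A g) ∧
        GivenByRule Ω (LinearMap.ker (A - LinearMap.id)) (LinearMap.ker (A + LinearMap.id))
          P hPr f g) ∧
    (∀ g : V → V, IsDiffeo g → PreservesLiouville Ω A g →
      ∃! f : LinearMap.ker (A - LinearMap.id) → LinearMap.ker (A - LinearMap.id),
        IsDiffeo f ∧
        GivenByRule Ω (LinearMap.ker (A - LinearMap.id)) (LinearMap.ker (A + LinearMap.id))
          P hPr f g) ∧
    (∀ (f₁ f₂ : LinearMap.ker (A - LinearMap.id) → LinearMap.ker (A - LinearMap.id))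
        (g₁ g₂ : V → V),
      IsDiffeo f₁ → IsDiffeo f₂ → IsDiffeo g₁ → IsDiffeo g₂ →
      PreservesLiouville Ω A g₁ → PreservesLiouville Ω A g₂ →
      GivenByRule Ω (LinearMap.ker (A - LinearMap.id)) (LinearMap.ker (A + LinearMap.id))
        P hPr f₁ g₁ →
      GivenByRule Ω (LinearMap.ker (A - LinearMap.id)) (LinearMap.ker (A + LinearMap.id))
        P hPr f₂ g₂ →
      GivenByRule Ω (LinearMap.ker (A - LinearMap.id)) (LinearMap.ker (A + LinearMap.id))
        P hPr (f₁ ∘ f₂) (g₁ ∘ g₂)) := by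
  have S : SympSetup Ω A P := ⟨hΩalt, hΩnd, hA, hA2, hPr, hPp, hPm⟩
  refine ⟨?_, ?_, ?_⟩
  · -- direction 1
    intro f hfD
    obtain ⟨hf, f', hf', hlf, hrf⟩ := hfD
    have pack := Gmap_pack S hPr hf hf' hlf hrf
    have pack' := Gmap_pack S hPr hf' hf hrf hlf
    refine ⟨Gmap Ω S.nd (LinearMap.ker (A - LinearMap.id)) P hPr f f',
      ⟨⟨⟨Gmap_smooth Ω S.nd (LinearMap.ker (A - LinearMap.id)) P hPr hf hf',
        Gmap Ω S.nd (LinearMap.ker (A - LinearMap.id)) P hPr f' f,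
        Gmap_smooth Ω S.nd (LinearMap.ker (A - LinearMap.id)) P hPr hf' hf,
        fun z => pack.2.2.2 z, fun z => pack'.2.2.2 z⟩,
        pack.2.2.1⟩, pack.2.1⟩, ?_⟩
    intro g₂ hg₂
    exact Gmap_unique S hPr hf hf' hlf hrf hg₂.2
  · -- direction 2
    intro g hgD hgL
    obtain ⟨hg, h, hh, hlg, hrg⟩ := hgD
    have main := dir2_main S hPr hg hh hlg hrg hgL
    exact ⟨fcan P (LinearMap.ker (A - LinearMap.id)) hPr g, ⟨main.1, main.2⟩,
      fun f₂ hf₂ => fcan_unique S hPr hf₂.2⟩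
  · -- composition
    intro f₁ f₂ g₁ g₂ hf₁D hf₂D hg₁D hg₂D hL₁ hL₂ hr₁ hr₂
    obtain ⟨hg₁, h₁, hh₁, hl₁, hr₁'⟩ := hg₁D
    obtain ⟨hg₂, h₂, hh₂, hl₂, hr₂'⟩ := hg₂D
    have hg₁d : Differentiable ℝ g₁ := hg₁.differentiable (by simp)
    have hg₂d : Differentiable ℝ g₂ := hg₂.differentiable (by simp)
    have hLc : PreservesLiouville Ω A (g₁ ∘ g₂) := liouville_comp hg₁d hg₂d hL₁ hL₂
    have hlc : Function.LeftInverse (h₂ ∘ h₁) (g₁ ∘ g₂) := by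
      intro x
      show h₂ (h₁ (g₁ (g₂ x))) = x
      rw [hl₁ (g₂ x), hl₂ x]
    have hrc : Function.RightInverse (h₂ ∘ h₁) (g₁ ∘ g₂) := by
      intro x
      show g₁ (g₂ (h₂ (h₁ x))) = x
      rw [hr₂' (h₁ x), hr₁' x]
    have main := dir2_main S hPr (hg₁.comp hg₂) (hh₂.comp hh₁) hlc hrc hLc
    have hPg₂ : ∀ z, P (g₂ z) = g₂ (P z) := Pg_commute S hg₂ hh₂ hl₂ hr₂' hL₂
    have hfc : f₁ ∘ f₂ = fcan P (LinearMap.ker (A - LinearMap.id)) hPr (g₁ ∘ g₂) := by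
      have e₁ : f₁ = fcan P (LinearMap.ker (A - LinearMap.id)) hPr g₁ := fcan_unique S hPr hr₁
      have e₂ : f₂ = fcan P (LinearMap.ker (A - LinearMap.id)) hPr g₂ := fcan_unique S hPr hr₂
      rw [e₁, e₂]
      funext x
      apply Subtype.ext
      show P (g₁ ↑(⟨P (g₂ ↑x), hPr _⟩ : LinearMap.ker (A - LinearMap.id))) = P ((g₁ ∘ g₂) ↑x)
      have hx : P (↑x : V) = ↑x := S.projp _ x.2
      have : P (g₂ ↑x) = g₂ ↑x := by rw [hPg₂, hx]
      simp only [this]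
      rfl
    rw [hfc]
    exact main.2
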